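/- arXiv:2212.06946 — 4 statements merged into one kernel-verified Lean document; each statement's English description precedes it below -/
import Mathlib

section
/- Let n be a natural number and let x denote the image of X in the quotient ring ℤ[X]/(X^{n+1}). Then the family of elements (1+x)^k, for k = 0, 1, …, n, is a basis of ℤ[X]/(X^{n+1}) regarded as a module over ℤ (the shifted Atiyah–Todd basis). -/
open Polynomial

/-! Reduction modulo the monic polynomial `X^(n+1)` identifies `ℤ[X]/(X^(n+1))` with the module of
polynomials of degree `≤ n`, and the Taylor shift `p(X) ↦ p(X + 1)` is a linear automorphism of that
module sending the monomial basis `X^k` to `(X + 1)^k`. -/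

namespace Polynomial

variable {R : Type*} [CommRing R]

lemma taylorLinearEquiv_basis (r : R) {n : ℕ} (i : Fin n) :
    (taylorLinearEquiv r n (degreeLT.basis R n i) : R[X]) = (X + C r) ^ (i : ℕ) := by
  rw [← taylor_X_pow, ← degreeLT.basis_val]
  rfl

variable [Nontrivial R] {g : R[X]}

lemma Monic.mem_degreeLT_natDegree_iff (hg : g.Monic) {p : R[X]} :
    p ∈ R[X]_(g.natDegree) ↔ p.degree < g.degree := by
  rw [mem_degreeLT, ← degree_eq_natDegree hg.ne_zero]

noncomputable def degreeLTEquivQuotient (hg : g.Monic) :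
    R[X]_(g.natDegree) ≃ₗ[R] R[X] ⧸ Ideal.span {g} :=
  .ofBijective ((Ideal.Quotient.mkₐ R _).toLinearMap ∘ₗ (R[X]_(g.natDegree)).subtype) <| by
    refine ⟨(injective_iff_map_eq_zero _).2 fun ⟨p, hp⟩ hp0 => Subtype.ext ?_, fun q => ?_⟩
    · have hdvd : g ∣ p := Ideal.mem_span_singleton.1 (Ideal.Quotient.eq_zero_iff_mem.1 hp0)
      change p = 0
      rw [← (modByMonic_eq_self_iff hg).2 (hg.mem_degreeLT_natDegree_iff.1 hp),
        (modByMonic_eq_zero_iff_dvd hg).2 hdvd]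
    · obtain ⟨f, rfl⟩ := Ideal.Quotient.mk_surjective q
      exact ⟨⟨f %ₘ g, hg.mem_degreeLT_natDegree_iff.2 (degree_modByMonic_lt f hg)⟩,
        AdjoinRoot.mk_leftInverse hg (AdjoinRoot.mk g f)⟩

@[simp]
lemma degreeLTEquivQuotient_apply (hg : g.Monic) (p : R[X]_(g.natDegree)) :
    degreeLTEquivQuotient hg p = Ideal.Quotient.mk _ (p : R[X]) :=
  rfl

noncomputable def Monic.taylorBasisQuotient (hg : g.Monic) (r : R) :
    Module.Basis (Fin g.natDegree) R (R[X] ⧸ Ideal.span {g}) :=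
  ((degreeLT.basis R _).map (taylorLinearEquiv r _)).map (degreeLTEquivQuotient hg)

lemma Monic.taylorBasisQuotient_apply (hg : g.Monic) (r : R) (k : Fin g.natDegree) :
    hg.taylorBasisQuotient r k = Ideal.Quotient.mk _ (X + C r) ^ (k : ℕ) := by
  rw [taylorBasisQuotient, Module.Basis.map_apply, Module.Basis.map_apply,
    degreeLTEquivQuotient_apply, taylorLinearEquiv_basis, map_pow]

end Polynomial

/-- **The shifted Atiyah–Todd basis.**
Let `x` be the image of `X` in `R := ℤ[X]/(X^(n+1))`.  Then the family
`(1+x)^k`, `k = 0, 1, …, n`, is a basis of `R` as a `ℤ`-module. -/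
theorem shifted_atiyah_todd_basis (n : ℕ) :
    let R := ℤ[X] ⧸ Ideal.span {(X : ℤ[X]) ^ (n + 1)}
    let x : R := Ideal.Quotient.mk (Ideal.span {(X : ℤ[X]) ^ (n + 1)}) X
    ∃ b : Module.Basis (Fin (n + 1)) ℤ R, ∀ k : Fin (n + 1), b k = (1 + x) ^ (k : ℕ) := by
  intro R x
  have hg : ((X : ℤ[X]) ^ (n + 1)).Monic := monic_X_pow _
  refine ⟨(hg.taylorBasisQuotient 1).reindex (finCongr (natDegree_X_pow _)), fun k => ?_⟩
  simp [Monic.taylorBasisQuotient_apply, x, add_comm]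
end

section
/- Let k be a field, H and H' Hopf algebras over k, χ : H → H' a bialgebra homomorphism, A a right H-comodule algebra with coaction ρ_A(a) = a₍₀₎ ⊗ a₍₁₎, A' a right H'-comodule algebra with coaction ρ_{A'}, α : A → A' a unital algebra homomorphism satisfying ρ_{A'} ∘ α = (α ⊗ χ) ∘ ρ_A, and M' a relative (A', H')-Hopf module. Then: (i) for every ξ = ∑ m'_i ⊗ h_i ∈ M' □^{H'} H and every a ∈ A, the element ξ·a := ∑ m'_i α(a₍₀₎) ⊗ h_i a₍₁₎ again lies in M' □^{H'} H; (ii) this formula defines a right A-module structure on M' □^{H'} H; (iii) the map id_{M'} ⊗ Δ_H restricts to a right H-comodule structure on M' □^{H'} H (with values in (M' □^{H'} H) ⊗ H), and together with the A-action of (ii) it makes M' □^{H'} H a relative (A, H)-Hopf module. -/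
/-!
The componentwise action of `R ⊗ H` on `M ⊗ H` is compatible with every structure map in
sight: `id ⊗ Δ_H` intertwines it with the action of `(R ⊗ H) ⊗ H` because `Δ_H` is
multiplicative, and for a relative Hopf module `M` the two maps `ρ_M ⊗ id` and
`id ⊗ (χ ⊗ id) Δ_H`, whose equalizer is `M □^{H'} H`, intertwine it with the action of
`(R ⊗ H') ⊗ H`. Hence `A' □^{H'} H` acts on `M' □^{H'} H`, and the action of `A` is obtained by
restricting along `a ↦ (α ⊗ id) ρ_A(a)`, which lands in `A' □^{H'} H` by coassociativity of
`ρ_A` and the compatibility of `α`. Since `- ⊗ H` is exact over a field, `id ⊗ Δ_H`, which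
commutes with both maps of the equalizer, restricts to the cotensor product.
-/

open TensorProduct LinearMap

section TensorAct

variable {k R S M N : Type*} [CommSemiring k]
  [AddCommMonoid R] [Module k R] [AddCommMonoid S] [Module k S]
  [AddCommMonoid M] [Module k M] [AddCommMonoid N] [Module k N]

variable (B : Type*) [Semiring B] [Algebra k B]

/-- With `act r m` read as `m · r`, the right action `(m ⊗ c) · (r ⊗ b) = m · r ⊗ c b`. -/
def tensorAct (act : R →ₗ[k] M →ₗ[k] M) : R ⊗[k] B →ₗ[k] M ⊗[k] B →ₗ[k] M ⊗[k] B :=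
  TensorProduct.lift
    (((TensorProduct.mapBilinear (RingHom.id k) M B M B).comp act).compl₂ (LinearMap.mul k B).flip)

variable {B}

@[simp]
theorem tensorAct_tmul (act : R →ₗ[k] M →ₗ[k] M) (r : R) (b : B) (m : M) (c : B) :
    tensorAct B act (r ⊗ₜ b) (m ⊗ₜ c) = act r m ⊗ₜ (c * b) := by
  simp [tensorAct]

theorem tensorAct_comp (act : S →ₗ[k] M →ₗ[k] M) (φ : R →ₗ[k] S) (x : R ⊗[k] B) :
    tensorAct B (act ∘ₗ φ) x = tensorAct B act (φ.rTensor B x) := by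
  induction x using TensorProduct.induction_on with
  | zero => simp
  | tmul r b => ext m c; simp
  | add x y hx hy => simp [hx, hy]

theorem rTensor_tensorAct {actM : R →ₗ[k] M →ₗ[k] M} {actN : S →ₗ[k] N →ₗ[k] N}
    {f : M →ₗ[k] N} {φ : R →ₗ[k] S} (hf : ∀ r m, f (actM r m) = actN (φ r) (f m))
    (x : R ⊗[k] B) (ξ : M ⊗[k] B) :
    f.rTensor B (tensorAct B actM x ξ) = tensorAct B actN (φ.rTensor B x) (f.rTensor B ξ) := by
  induction x using TensorProduct.induction_on generalizing ξ with
  | zero => simp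
  | tmul r b =>
    induction ξ using TensorProduct.induction_on with
    | zero => simp
    | tmul m c => simp [hf]
    | add ξ η hξ hη => simp [hξ, hη]
  | add x y hx hy => simp [hx, hy]

theorem lTensor_tensorAct {C F : Type*} [Semiring C] [Algebra k C] [FunLike F B C]
    [AlgHomClass F k B C] (act : R →ₗ[k] M →ₗ[k] M) (χ : F) (x : R ⊗[k] B) (ξ : M ⊗[k] B) :
    (χ : B →ₗ[k] C).lTensor M (tensorAct B act x ξ) =
      tensorAct C act ((χ : B →ₗ[k] C).lTensor R x) ((χ : B →ₗ[k] C).lTensor M ξ) := by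
  induction x using TensorProduct.induction_on generalizing ξ with
  | zero => simp
  | tmul r b =>
    induction ξ using TensorProduct.induction_on with
    | zero => simp
    | tmul m c => simp
    | add ξ η hξ hη => simp [hξ, hη]
  | add x y hx hy => simp [hx, hy]

end TensorAct

section TensorActAlgebra

variable {k R M : Type*} [CommSemiring k] [Semiring R] [Algebra k R]
  [AddCommMonoid M] [Module k M] {B : Type*} [Semiring B] [Algebra k B]
  {act : R →ₗ[k] M →ₗ[k] M}

theorem tensorAct_one (h : act 1 = LinearMap.id) : tensorAct B act 1 = LinearMap.id := by
  ext m c; simp [Algebra.TensorProduct.one_def, h]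

theorem tensorAct_mul (h : ∀ a b, act (a * b) = act b ∘ₗ act a) (x y : R ⊗[k] B) :
    tensorAct B act (x * y) = tensorAct B act y ∘ₗ tensorAct B act x := by
  induction x using TensorProduct.induction_on generalizing y with
  | zero => simp
  | tmul r b =>
    induction y using TensorProduct.induction_on with
    | zero => simp
    | tmul s d => ext m c; simp [h, mul_assoc]
    | add y z hy hz => simp [mul_add, hy, hz, LinearMap.add_comp]
  | add x z hx hz => simp [add_mul, hx, hz, LinearMap.comp_add]

end TensorActAlgebra

section Pentagon

variable {k M N P Q : Type*} [CommSemiring k] [AddCommMonoid M] [Module k M]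
  [AddCommMonoid N] [Module k N] [AddCommMonoid P] [Module k P] [AddCommMonoid Q] [Module k Q]

theorem rTensor_assoc_symm_assoc_symm_tmul_assoc_symm (m : M) (t : N ⊗[k] (P ⊗[k] Q)) :
    (TensorProduct.assoc k M N P).symm.toLinearMap.rTensor Q
        ((TensorProduct.assoc k M (N ⊗[k] P) Q).symm (m ⊗ₜ (TensorProduct.assoc k N P Q).symm t)) =
      (TensorProduct.assoc k (M ⊗[k] N) P Q).symm
        ((TensorProduct.assoc k M N (P ⊗[k] Q)).symm (m ⊗ₜ t)) := by
  have pentagon : (TensorProduct.assoc k M N P).symm.toLinearMap.rTensor Q ∘ₗ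
      (TensorProduct.assoc k M (N ⊗[k] P) Q).symm.toLinearMap ∘ₗ
        (TensorProduct.assoc k N P Q).symm.toLinearMap.lTensor M =
      (TensorProduct.assoc k (M ⊗[k] N) P Q).symm.toLinearMap ∘ₗ
        (TensorProduct.assoc k M N (P ⊗[k] Q)).symm.toLinearMap := by
    ext m n p q; rfl
  exact congr($pentagon (m ⊗ₜ t))

end Pentagon

section CofreeCoaction

variable {k M N : Type*} [CommSemiring k] [AddCommMonoid M] [Module k M]
  [AddCommMonoid N] [Module k N]

variable (M) (H : Type*) [AddCommMonoid H] [Module k H] [Coalgebra k H]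

def cofreeCoaction : M ⊗[k] H →ₗ[k] (M ⊗[k] H) ⊗[k] H :=
  (TensorProduct.assoc k M H H).symm.toLinearMap ∘ₗ Coalgebra.comul.lTensor M

variable {M H}

theorem cofreeCoaction_tmul (m : M) (h : H) :
    cofreeCoaction M H (m ⊗ₜ h) = (TensorProduct.assoc k M H H).symm (m ⊗ₜ Coalgebra.comul h) :=
  rfl

theorem rTensor_rTensor_comp_cofreeCoaction (f : M →ₗ[k] N) :
    (f.rTensor H).rTensor H ∘ₗ cofreeCoaction M H = cofreeCoaction N H ∘ₗ f.rTensor H := by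
  ext m h
  simp [cofreeCoaction, LinearMap.rTensor, map_map_assoc_symm]

theorem rTensor_cofreeCoaction_comp_cofreeCoaction :
    (cofreeCoaction M H).rTensor H ∘ₗ cofreeCoaction M H =
      cofreeCoaction (M ⊗[k] H) H ∘ₗ cofreeCoaction M H := by
  ext m h
  have left (c : H ⊗[k] H) :
      (cofreeCoaction M H).rTensor H ((TensorProduct.assoc k M H H).symm (m ⊗ₜ c)) =
      (TensorProduct.assoc k M H H).symm.toLinearMap.rTensor H
        ((TensorProduct.assoc k M (H ⊗[k] H) H).symm (m ⊗ₜ Coalgebra.comul.rTensor H c)) := by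
    induction c using TensorProduct.induction_on with
    | zero => simp
    | tmul a b => simp [cofreeCoaction_tmul]
    | add c d hc hd => simp_all [tmul_add]
  have right (c : H ⊗[k] H) :
      cofreeCoaction (M ⊗[k] H) H ((TensorProduct.assoc k M H H).symm (m ⊗ₜ c)) =
      (TensorProduct.assoc k (M ⊗[k] H) H H).symm
        ((TensorProduct.assoc k M H (H ⊗[k] H)).symm (m ⊗ₜ Coalgebra.comul.lTensor H c)) := by
    induction c using TensorProduct.induction_on with
    | zero => simp
    | tmul a b => simp [cofreeCoaction_tmul]
    | add c d hc hd => simp_all [tmul_add]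
  simp only [AlgebraTensorModule.curry_apply, curry_apply, LinearMap.coe_restrictScalars,
    coe_comp, Function.comp_apply, cofreeCoaction_tmul, left, right, ← Coalgebra.coassoc_symm_apply,
    rTensor_assoc_symm_assoc_symm_tmul_assoc_symm]

theorem rid_comp_lTensor_counit_comp_cofreeCoaction :
    (TensorProduct.rid k (M ⊗[k] H)).toLinearMap ∘ₗ Coalgebra.counit.lTensor (M ⊗[k] H) ∘ₗ
      cofreeCoaction M H = LinearMap.id := by
  ext m h
  have (c : H ⊗[k] H) : TensorProduct.rid k (M ⊗[k] H) (Coalgebra.counit.lTensor (M ⊗[k] H)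
      ((TensorProduct.assoc k M H H).symm (m ⊗ₜ c))) =
      m ⊗ₜ TensorProduct.rid k H (Coalgebra.counit.lTensor H c) := by
    induction c using TensorProduct.induction_on with
    | zero => simp
    | tmul a b => simp
    | add c d hc hd => simp_all [tmul_add]
  simp [cofreeCoaction_tmul, this]

theorem cofreeCoaction_comp_rTensor_comp {ρ : M →ₗ[k] M ⊗[k] H}
    (hρ : ρ.rTensor H ∘ₗ ρ = cofreeCoaction M H ∘ₗ ρ) (f : M →ₗ[k] N) :
    cofreeCoaction N H ∘ₗ f.rTensor H ∘ₗ ρ = (f.rTensor H ∘ₗ ρ).rTensor H ∘ₗ ρ := by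
  rw [← LinearMap.comp_assoc, ← rTensor_rTensor_comp_cofreeCoaction, LinearMap.comp_assoc, ← hρ,
    rTensor_comp, LinearMap.comp_assoc]

end CofreeCoaction

section Bialgebra

variable {k R M H : Type*} [CommSemiring k] [AddCommMonoid R] [Module k R]
  [AddCommMonoid M] [Module k M] [Semiring H] [Bialgebra k H]

theorem tensorAct_assoc_symm_tmul (act : R →ₗ[k] M →ₗ[k] M) (r : R) (m : M) (d e : H ⊗[k] H) :
    tensorAct H (tensorAct H act) ((TensorProduct.assoc k R H H).symm (r ⊗ₜ d))
      ((TensorProduct.assoc k M H H).symm (m ⊗ₜ e)) =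
        (TensorProduct.assoc k M H H).symm (act r m ⊗ₜ (e * d)) := by
  induction d using TensorProduct.induction_on generalizing e with
  | zero => simp
  | tmul d₁ d₂ =>
    induction e using TensorProduct.induction_on with
    | zero => simp
    | tmul e₁ e₂ => simp
    | add e e' he he' => simp_all [tmul_add, add_mul]
  | add d d' hd hd' => simp_all [tmul_add, mul_add]

theorem cofreeCoaction_tensorAct (act : R →ₗ[k] M →ₗ[k] M) (x : R ⊗[k] H) (ξ : M ⊗[k] H) :
    cofreeCoaction M H (tensorAct H act x ξ) =
      tensorAct H (tensorAct H act) (cofreeCoaction R H x) (cofreeCoaction M H ξ) := by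
  induction x using TensorProduct.induction_on generalizing ξ with
  | zero => simp
  | tmul r u =>
    induction ξ using TensorProduct.induction_on with
    | zero => simp
    | tmul m g =>
      simp [cofreeCoaction_tmul, tensorAct_assoc_symm_tmul, Bialgebra.comul_mul]
    | add ξ η hξ hη => simp [hξ, hη]
  | add x y hx hy => simp [hx, hy]

end Bialgebra

section Cotensor

variable {k M N H H' : Type*} [CommRing k] [AddCommGroup M] [Module k M]
  [AddCommGroup N] [Module k N]

theorem mem_range_rTensor_subtype_ker_sub (H : Type*) [AddCommGroup H] [Module k H]
    [Module.Flat k H] {φ ψ : M →ₗ[k] N} {δM : M →ₗ[k] M ⊗[k] H} {δN : N →ₗ[k] N ⊗[k] H}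
    (hφ : φ.rTensor H ∘ₗ δM = δN ∘ₗ φ) (hψ : ψ.rTensor H ∘ₗ δM = δN ∘ₗ ψ) {ξ : M}
    (hξ : ξ ∈ ker (φ - ψ)) : δM ξ ∈ range ((ker (φ - ψ)).subtype.rTensor H) := by
  refine (Module.Flat.rTensor_exact H (exact_subtype_ker_map (φ - ψ)) (δM ξ)).mp ?_
  rw [rTensor_sub, LinearMap.sub_apply, ← comp_apply, hφ, ← comp_apply, hψ, comp_apply,
    comp_apply, ← map_sub, ← LinearMap.sub_apply, mem_ker.mp hξ, map_zero]

variable [AddCommGroup H] [Module k H] [Coalgebra k H] [AddCommGroup H'] [Module k H']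

variable (H) in
/-- The cotensor product `M □^{H'} H ⊆ M ⊗ H` of the `H'`-comodule `(M, ρ)` with `H`, the latter
viewed as a left `H'`-comodule through `χ`. -/
def cotensor (ρ : M →ₗ[k] M ⊗[k] H') (χ : H →ₗ[k] H') : Submodule k (M ⊗[k] H) :=
  ker (ρ.rTensor H - (χ.lTensor M).rTensor H ∘ₗ cofreeCoaction M H)

theorem cofreeCoaction_mem_range_rTensor_cotensor [Module.Flat k H]
    {ρ : M →ₗ[k] M ⊗[k] H'} {χ : H →ₗ[k] H'} {ξ : M ⊗[k] H} (hξ : ξ ∈ cotensor H ρ χ) :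
    cofreeCoaction M H ξ ∈ range ((cotensor H ρ χ).subtype.rTensor H) := by
  refine mem_range_rTensor_subtype_ker_sub H (rTensor_rTensor_comp_cofreeCoaction ρ) ?_ hξ
  rw [rTensor_comp, comp_assoc, rTensor_cofreeCoaction_comp_cofreeCoaction, ← comp_assoc,
    rTensor_rTensor_comp_cofreeCoaction, comp_assoc]

theorem rTensor_comp_mem_cotensor {A A' : Type*} [AddCommGroup A] [Module k A]
    [AddCommGroup A'] [Module k A'] {ρ : A →ₗ[k] A ⊗[k] H} {ρ' : A' →ₗ[k] A' ⊗[k] H'}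
    {f : A →ₗ[k] A'} {χ : H →ₗ[k] H'} (hρ : ρ.rTensor H ∘ₗ ρ = cofreeCoaction A H ∘ₗ ρ)
    (hf : ρ' ∘ₗ f = map f χ ∘ₗ ρ) (a : A) : f.rTensor H (ρ a) ∈ cotensor H ρ' χ := by
  have key : ρ'.rTensor H ∘ₗ f.rTensor H ∘ₗ ρ =
      (χ.lTensor A').rTensor H ∘ₗ cofreeCoaction A' H ∘ₗ f.rTensor H ∘ₗ ρ := by
    rw [cofreeCoaction_comp_rTensor_comp hρ, ← comp_assoc, ← rTensor_comp, hf, ← comp_assoc,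
      ← rTensor_comp, ← comp_assoc, lTensor_comp_rTensor]
  rw [cotensor, mem_ker, LinearMap.sub_apply, sub_eq_zero]
  exact congr($key a)

end Cotensor

section CotensorAct

variable {k R M H H' : Type*} [CommRing k] [AddCommGroup R] [Module k R]
  [AddCommGroup M] [Module k M] [Ring H] [Bialgebra k H] [Ring H'] [Algebra k H']

theorem tensorAct_mem_cotensor {act : R →ₗ[k] M →ₗ[k] M} {ρR : R →ₗ[k] R ⊗[k] H'}
    {ρM : M →ₗ[k] M ⊗[k] H'} (hρ : ∀ r m, ρM (act r m) = tensorAct H' act (ρR r) (ρM m))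
    {F : Type*} [FunLike F H H'] [AlgHomClass F k H H'] {χ : F} {y : R ⊗[k] H}
    (hy : y ∈ cotensor H ρR (χ : H →ₗ[k] H')) {ξ : M ⊗[k] H}
    (hξ : ξ ∈ cotensor H ρM (χ : H →ₗ[k] H')) :
    tensorAct H act y ξ ∈ cotensor H ρM (χ : H →ₗ[k] H') := by
  rw [cotensor, mem_ker, LinearMap.sub_apply, sub_eq_zero, comp_apply] at hy hξ ⊢
  rw [rTensor_tensorAct hρ, cofreeCoaction_tensorAct, rTensor_tensorAct (lTensor_tensorAct act χ),
    hy, hξ]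

end CotensorAct

theorem cotensor_relative_hopf_module_general
    (k H H' A A' M' : Type*) [Field k] [Ring H] [Ring H']
    [HopfAlgebra k H] [HopfAlgebra k H']
    [Ring A] [Algebra k A] [Ring A'] [Algebra k A']
    [AddCommGroup M'] [Module k M']
    (χ : H →ₐc[k] H')
    -- `A` is a right `H`-comodule algebra
    (ρA : A →ₐ[k] A ⊗[k] H)
    (hρA_coassoc : (LinearMap.rTensor H ρA.toLinearMap) ∘ₗ ρA.toLinearMap =
      (TensorProduct.assoc k A H H).symm.toLinearMap ∘ₗ
        (LinearMap.lTensor A Coalgebra.comul) ∘ₗ ρA.toLinearMap)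
    -- `A'` is a right `H'`-comodule algebra
    (ρA' : A' →ₐ[k] A' ⊗[k] H')
    -- `α : A → A'` intertwines the coactions along `χ`
    (α : A →ₐ[k] A')
    (hα : ρA'.toLinearMap ∘ₗ α.toLinearMap =
      (TensorProduct.map α.toLinearMap (χ : H →ₗ[k] H')) ∘ₗ ρA.toLinearMap)
    -- `M'` is a right `A'`-module: `actM' a' m' = m' · a'`
    (actM' : A' →ₗ[k] M' →ₗ[k] M')
    (hactM'_one : actM' 1 = LinearMap.id)
    (hactM'_mul : ∀ a' b' : A', actM' (a' * b') = actM' b' ∘ₗ actM' a')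
    -- `M'` is a right `H'`-comodule
    (ρM' : M' →ₗ[k] M' ⊗[k] H')
    -- `M'` is a relative `(A', H')`-Hopf module
    (hopfM' : ∀ a' : A', ρM' ∘ₗ actM' a' =
      (TensorProduct.lift
          (((TensorProduct.mapBilinear (RingHom.id k) M' H' M' H').comp actM').compl₂
            ((LinearMap.mul k H').flip)) (ρA' a')) ∘ₗ ρM') :
    -- the cotensor product `M' □^{H'} H` as a subspace of `M' ⊗ H`
    let cot : Submodule k (M' ⊗[k] H) := LinearMap.ker
      ((LinearMap.rTensor H ρM') -
        ((TensorProduct.assoc k M' H' H).symm.toLinearMap ∘ₗ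
          (LinearMap.lTensor M'
            ((LinearMap.rTensor H (χ : H →ₗ[k] H')) ∘ₗ Coalgebra.comul))))
    -- the componentwise action of `A' ⊗ H` on `M' ⊗ H`
    let smH : A' ⊗[k] H →ₗ[k] (M' ⊗[k] H) →ₗ[k] (M' ⊗[k] H) :=
      TensorProduct.lift
        (((TensorProduct.mapBilinear (RingHom.id k) M' H M' H).comp actM').compl₂
          ((LinearMap.mul k H).flip))
    -- the right `A`-action `ξ · a = ∑ m'ᵢ α(a₍₀₎) ⊗ hᵢ a₍₁₎` on `M' ⊗ H`
    let actA : A →ₗ[k] (M' ⊗[k] H) →ₗ[k] (M' ⊗[k] H) :=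
      smH ∘ₗ (TensorProduct.map α.toLinearMap LinearMap.id) ∘ₗ ρA.toLinearMap
    -- the coaction `id_{M'} ⊗ Δ_H` on `M' ⊗ H`
    let δ : M' ⊗[k] H →ₗ[k] (M' ⊗[k] H) ⊗[k] H :=
      (TensorProduct.assoc k M' H H).symm.toLinearMap ∘ₗ
        (LinearMap.lTensor M' Coalgebra.comul)
    -- the componentwise action of `A ⊗ H` on `(M' ⊗ H) ⊗ H`
    let smMH : A ⊗[k] H →ₗ[k] ((M' ⊗[k] H) ⊗[k] H) →ₗ[k] ((M' ⊗[k] H) ⊗[k] H) :=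
      TensorProduct.lift
        (((TensorProduct.mapBilinear (RingHom.id k) (M' ⊗[k] H) H (M' ⊗[k] H) H).comp actA).compl₂
          ((LinearMap.mul k H).flip))
    -- (i) the action preserves the cotensor product
    (∀ a : A, ∀ ξ ∈ cot, actA a ξ ∈ cot) ∧
    -- (ii) it is a right `A`-module structure
    (actA 1 = LinearMap.id) ∧ (∀ a b : A, actA (a * b) = actA b ∘ₗ actA a) ∧
    -- (iii) the coaction `id ⊗ Δ_H` restricts to the cotensor product …
    (∀ ξ ∈ cot, δ ξ ∈ LinearMap.range (LinearMap.rTensor H cot.subtype)) ∧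
    -- … it is coassociative and counital …
    ((LinearMap.rTensor H δ) ∘ₗ δ =
        (TensorProduct.assoc k (M' ⊗[k] H) H H).symm.toLinearMap ∘ₗ
          (LinearMap.lTensor (M' ⊗[k] H) Coalgebra.comul) ∘ₗ δ) ∧
    ((TensorProduct.rid k (M' ⊗[k] H)).toLinearMap ∘ₗ
        (LinearMap.lTensor (M' ⊗[k] H) Coalgebra.counit) ∘ₗ δ = LinearMap.id) ∧
    -- … and together with the `A`-action it satisfies the Hopf-module compatibility
    (∀ a : A, δ ∘ₗ actA a = (smMH (ρA a)) ∘ₗ δ) := by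
  intro cot smH actA δ smMH
  set φ : A →ₐ[k] A' ⊗[k] H := (Algebra.TensorProduct.map α (AlgHom.id k H)).comp ρA
  have hactA : actA = tensorAct H actM' ∘ₗ φ.toLinearMap := rfl
  have hcot : cot = cotensor H ρM' (χ : H →ₗ[k] H') := by
    simp only [cot, cotensor, cofreeCoaction, lTensor_comp, ← comp_assoc,
      rTensor_lTensor_comp_assoc_symm]
  have hρA : ρA.toLinearMap.rTensor H ∘ₗ ρA.toLinearMap =
      cofreeCoaction A H ∘ₗ ρA.toLinearMap := hρA_coassoc
  have hopf (a' : A') (m : M') : ρM' (actM' a' m) = tensorAct H' actM' (ρA' a') (ρM' m) :=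
    congr($(hopfM' a') m)
  have hδφ (a : A) : cofreeCoaction A' H (φ a) = φ.toLinearMap.rTensor H (ρA a) :=
    congr($(cofreeCoaction_comp_rTensor_comp hρA α.toLinearMap) a)
  refine ⟨fun a ξ hξ ↦ ?_, ?_, fun a b ↦ ?_, fun ξ hξ ↦ ?_,
    rTensor_cofreeCoaction_comp_cofreeCoaction, rid_comp_lTensor_counit_comp_cofreeCoaction,
    fun a ↦ LinearMap.ext fun ξ ↦ ?_⟩
  · rw [hcot] at hξ ⊢
    exact tensorAct_mem_cotensor hopf (rTensor_comp_mem_cotensor hρA hα a) hξ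
  · rw [hactA, comp_apply, AlgHom.toLinearMap_apply, map_one, tensorAct_one hactM'_one]
  · rw [hactA, comp_apply, AlgHom.toLinearMap_apply, map_mul, tensorAct_mul hactM'_mul]
    rfl
  · rw [hcot] at hξ ⊢
    exact cofreeCoaction_mem_range_rTensor_cotensor hξ
  · change cofreeCoaction M' H (tensorAct H actM' (φ a) ξ) =
      tensorAct H (tensorAct H actM' ∘ₗ φ.toLinearMap) (ρA a) (cofreeCoaction M' H ξ)
    rw [cofreeCoaction_tensorAct, tensorAct_comp, hδφ]

/-- **The cotensor product `M' □^{H'} H` is a relative `(A, H)`-Hopf module.**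
Let `χ : H → H'` be a bialgebra homomorphism of Hopf algebras over a field `k`,
`A` a right `H`-comodule algebra, `A'` a right `H'`-comodule algebra,
`α : A → A'` an algebra map with `ρ_{A'} ∘ α = (α ⊗ χ) ∘ ρ_A`, and `M'` a relative
`(A', H')`-Hopf module.  Then:
(i) the formula `ξ · a = ∑ m'ᵢ α(a₍₀₎) ⊗ hᵢ a₍₁₎` maps the cotensor product
`M' □^{H'} H ⊆ M' ⊗ H` to itself; (ii) it defines a right `A`-module structure;
(iii) `id ⊗ Δ_H` restricts to a right `H`-comodule structure on `M' □^{H'} H` which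
together with the `A`-action makes it a relative `(A, H)`-Hopf module. -/
theorem cotensor_relative_hopf_module
    (k H H' A A' M' : Type*) [Field k] [Ring H] [Ring H']
    [HopfAlgebra k H] [HopfAlgebra k H']
    [Ring A] [Algebra k A] [Ring A'] [Algebra k A']
    [AddCommGroup M'] [Module k M']
    (χ : H →ₐc[k] H')
    -- `A` is a right `H`-comodule algebra
    (ρA : A →ₐ[k] A ⊗[k] H)
    (hρA_coassoc : (LinearMap.rTensor H ρA.toLinearMap) ∘ₗ ρA.toLinearMap =
      (TensorProduct.assoc k A H H).symm.toLinearMap ∘ₗ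
        (LinearMap.lTensor A Coalgebra.comul) ∘ₗ ρA.toLinearMap)
    (hρA_counit : (TensorProduct.rid k A).toLinearMap ∘ₗ
      (LinearMap.lTensor A Coalgebra.counit) ∘ₗ ρA.toLinearMap = LinearMap.id)
    -- `A'` is a right `H'`-comodule algebra
    (ρA' : A' →ₐ[k] A' ⊗[k] H')
    (hρA'_coassoc : (LinearMap.rTensor H' ρA'.toLinearMap) ∘ₗ ρA'.toLinearMap =
      (TensorProduct.assoc k A' H' H').symm.toLinearMap ∘ₗ
        (LinearMap.lTensor A' Coalgebra.comul) ∘ₗ ρA'.toLinearMap)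
    (hρA'_counit : (TensorProduct.rid k A').toLinearMap ∘ₗ
      (LinearMap.lTensor A' Coalgebra.counit) ∘ₗ ρA'.toLinearMap = LinearMap.id)
    -- `α : A → A'` intertwines the coactions along `χ`
    (α : A →ₐ[k] A')
    (hα : ρA'.toLinearMap ∘ₗ α.toLinearMap =
      (TensorProduct.map α.toLinearMap (χ : H →ₗ[k] H')) ∘ₗ ρA.toLinearMap)
    -- `M'` is a right `A'`-module: `actM' a' m' = m' · a'`
    (actM' : A' →ₗ[k] M' →ₗ[k] M')
    (hactM'_one : actM' 1 = LinearMap.id)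
    (hactM'_mul : ∀ a' b' : A', actM' (a' * b') = actM' b' ∘ₗ actM' a')
    -- `M'` is a right `H'`-comodule
    (ρM' : M' →ₗ[k] M' ⊗[k] H')
    (hρM'_coassoc : (LinearMap.rTensor H' ρM') ∘ₗ ρM' =
      (TensorProduct.assoc k M' H' H').symm.toLinearMap ∘ₗ
        (LinearMap.lTensor M' Coalgebra.comul) ∘ₗ ρM')
    (hρM'_counit : (TensorProduct.rid k M').toLinearMap ∘ₗ
      (LinearMap.lTensor M' Coalgebra.counit) ∘ₗ ρM' = LinearMap.id)
    -- `M'` is a relative `(A', H')`-Hopf module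
    (hopfM' : ∀ a' : A', ρM' ∘ₗ actM' a' =
      (TensorProduct.lift
          (((TensorProduct.mapBilinear (RingHom.id k) M' H' M' H').comp actM').compl₂
            ((LinearMap.mul k H').flip)) (ρA' a')) ∘ₗ ρM') :
    -- the cotensor product `M' □^{H'} H` as a subspace of `M' ⊗ H`
    let cot : Submodule k (M' ⊗[k] H) := LinearMap.ker
      ((LinearMap.rTensor H ρM') -
        ((TensorProduct.assoc k M' H' H).symm.toLinearMap ∘ₗ
          (LinearMap.lTensor M'
            ((LinearMap.rTensor H (χ : H →ₗ[k] H')) ∘ₗ Coalgebra.comul))))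
    -- the componentwise action of `A' ⊗ H` on `M' ⊗ H`
    let smH : A' ⊗[k] H →ₗ[k] (M' ⊗[k] H) →ₗ[k] (M' ⊗[k] H) :=
      TensorProduct.lift
        (((TensorProduct.mapBilinear (RingHom.id k) M' H M' H).comp actM').compl₂
          ((LinearMap.mul k H).flip))
    -- the right `A`-action `ξ · a = ∑ m'ᵢ α(a₍₀₎) ⊗ hᵢ a₍₁₎` on `M' ⊗ H`
    let actA : A →ₗ[k] (M' ⊗[k] H) →ₗ[k] (M' ⊗[k] H) :=
      smH ∘ₗ (TensorProduct.map α.toLinearMap LinearMap.id) ∘ₗ ρA.toLinearMap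
    -- the coaction `id_{M'} ⊗ Δ_H` on `M' ⊗ H`
    let δ : M' ⊗[k] H →ₗ[k] (M' ⊗[k] H) ⊗[k] H :=
      (TensorProduct.assoc k M' H H).symm.toLinearMap ∘ₗ
        (LinearMap.lTensor M' Coalgebra.comul)
    -- the componentwise action of `A ⊗ H` on `(M' ⊗ H) ⊗ H`
    let smMH : A ⊗[k] H →ₗ[k] ((M' ⊗[k] H) ⊗[k] H) →ₗ[k] ((M' ⊗[k] H) ⊗[k] H) :=
      TensorProduct.lift
        (((TensorProduct.mapBilinear (RingHom.id k) (M' ⊗[k] H) H (M' ⊗[k] H) H).comp actA).compl₂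
          ((LinearMap.mul k H).flip))
    -- (i) the action preserves the cotensor product
    (∀ a : A, ∀ ξ ∈ cot, actA a ξ ∈ cot) ∧
    -- (ii) it is a right `A`-module structure
    (actA 1 = LinearMap.id) ∧ (∀ a b : A, actA (a * b) = actA b ∘ₗ actA a) ∧
    -- (iii) the coaction `id ⊗ Δ_H` restricts to the cotensor product …
    (∀ ξ ∈ cot, δ ξ ∈ LinearMap.range (LinearMap.rTensor H cot.subtype)) ∧
    -- … it is coassociative and counital …
    ((LinearMap.rTensor H δ) ∘ₗ δ =
        (TensorProduct.assoc k (M' ⊗[k] H) H H).symm.toLinearMap ∘ₗ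
          (LinearMap.lTensor (M' ⊗[k] H) Coalgebra.comul) ∘ₗ δ) ∧
    ((TensorProduct.rid k (M' ⊗[k] H)).toLinearMap ∘ₗ
        (LinearMap.lTensor (M' ⊗[k] H) Coalgebra.counit) ∘ₗ δ = LinearMap.id) ∧
    -- … and together with the `A`-action it satisfies the Hopf-module compatibility
    (∀ a : A, δ ∘ₗ actA a = (smMH (ρA a)) ∘ₗ δ) :=
  cotensor_relative_hopf_module_general k H H' A A' M' χ ρA hρA_coassoc ρA' α hα actM' hactM'_one
    hactM'_mul ρM' hopfM'
end

section
/- Let k be a field, H a Hopf algebra over k whose antipode S is bijective, M a right H-comodule with coaction ρ_M(m) = m₍₀₎ ⊗ m₍₁₎, and V a left H-comodule with coaction λ_V(v) = v₍₋₁₎ ⊗ v₍₀₎. Equip M ⊗ V with the right H-coaction ρ(m ⊗ v) := (m₍₀₎ ⊗ v₍₀₎) ⊗ S⁻¹(v₍₋₁₎) m₍₁₎. Then the coinvariants {ξ ∈ M ⊗ V : ρ(ξ) = ξ ⊗ 1_H} coincide, as a subspace of M ⊗ V, with the cotensor product M □^H V := {ξ ∈ M ⊗ V : (ρ_M ⊗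 id_V)(ξ) = (id_M ⊗ λ_V)(ξ) in M ⊗ H ⊗ V}. -/
/-!
Let `τ : H ⊗ V → V ⊗ H`, `a ⊗ v ↦ v₍₀₎ ⊗ S⁻¹(v₍₋₁₎) a`. Up to associators the coaction on `M ⊗ V`
is `(id ⊗ τ) ∘ (ρ_M ⊗ id)`, and the identity `S⁻¹(h₍₂₎) h₍₁₎ = ε(h) 1` gives `τ (λ_V v) = v ⊗ 1`,
so `ξ ⊗ 1 = (id ⊗ τ)((id ⊗ λ_V) ξ)`. Hence `ξ` is coinvariant iff `(ρ_M ⊗ id) ξ` and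
`(id ⊗ λ_V) ξ` have the same image under `id ⊗ τ`, which is injective: by the identity
`h₍₂₎ S⁻¹(h₍₁₎) = ε(h) 1`, `τ` has the left inverse `v ⊗ h ↦ v₍₋₁₎ h ⊗ v₍₀₎`.
-/

open TensorProduct LinearMap

namespace HopfAlgebra
open Coalgebra

section Antipode

variable {R A : Type*} [CommSemiring R] [Semiring A] [HopfAlgebra R A] (Sinv : A →ₗ[R] A)

lemma mul_rTensor_comm_comul_of_antipode_inv
    (hS₁ : ∀ a, Sinv (antipode R a) = a) (hS₂ : ∀ a, antipode R (Sinv a) = a) :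
    mul' R A ∘ₗ rTensor A Sinv ∘ₗ (TensorProduct.comm R A A).toLinearMap ∘ₗ comul =
      Algebra.linearMap R A ∘ₗ counit := by
  have hSS : antipode R ∘ₗ Sinv = LinearMap.id := by ext a; exact hS₂ a
  have hSinv_one : Sinv 1 = 1 := by simpa using hS₁ 1
  calc _ = Sinv ∘ₗ (antipode R ∘ₗ mul' R A ∘ₗ (TensorProduct.comm R A A).toLinearMap) ∘ₗ
        lTensor A Sinv ∘ₗ comul := by ext a; simp [hS₁, rTensor_comm]
    _ = Sinv ∘ₗ mul' R A ∘ₗ rTensor A (antipode R) ∘ₗ comul := by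
        rw [antipode_comp_mul_comp_comm, comp_assoc, ← comp_assoc comul, map_comp_lTensor, hSS]
        rfl
    _ = _ := by
        rw [mul_antipode_rTensor_comul]
        ext; simp [Algebra.algebraMap_eq_smul_one, hSinv_one]

lemma mul_comm_rTensor_comul_of_antipode_inv
    (hS₁ : ∀ a, Sinv (antipode R a) = a) (hS₂ : ∀ a, antipode R (Sinv a) = a) :
    mul' R A ∘ₗ (TensorProduct.comm R A A).toLinearMap ∘ₗ rTensor A Sinv ∘ₗ comul =
      Algebra.linearMap R A ∘ₗ counit := by
  have hSS : antipode R ∘ₗ Sinv = LinearMap.id := by ext a; exact hS₂ a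
  have hSinv_one : Sinv 1 = 1 := by simpa using hS₁ 1
  calc _ = Sinv ∘ₗ (antipode R ∘ₗ mul' R A ∘ₗ (TensorProduct.comm R A A).toLinearMap) ∘ₗ
        rTensor A Sinv ∘ₗ comul := by ext a; simp [hS₁]
    _ = Sinv ∘ₗ mul' R A ∘ₗ lTensor A (antipode R) ∘ₗ comul := by
        rw [antipode_comp_mul_comp_comm, comp_assoc, ← comp_assoc comul, map_comp_rTensor, hSS]
        rfl
    _ = _ := by
        rw [mul_antipode_lTensor_comul]
        ext; simp [Algebra.algebraMap_eq_smul_one, hSinv_one]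

end Antipode

section Twist

variable {R H V : Type*} [CommSemiring R] [Semiring H] [HopfAlgebra R H]
  [AddCommMonoid V] [Module R V] (Sinv : H →ₗ[R] H) (lamV : V →ₗ[R] H ⊗[R] V)

/-- `a ⊗ v ↦ v₍₀₎ ⊗ S⁻¹(v₍₋₁₎) a` -/
noncomputable def coactTwist : H ⊗[R] V →ₗ[R] V ⊗[R] H :=
  (TensorProduct.comm R H V).toLinearMap ∘ₗ
    rTensor V (mul' R H ∘ₗ rTensor H Sinv ∘ₗ (TensorProduct.comm R H H).toLinearMap) ∘ₗ
    (TensorProduct.assoc R H H V).symm.toLinearMap ∘ₗ lTensor H lamV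

/-- `v ⊗ h ↦ v₍₋₁₎ h ⊗ v₍₀₎` -/
noncomputable def coactUntwist : V ⊗[R] H →ₗ[R] H ⊗[R] V :=
  rTensor V (mul' R H ∘ₗ (TensorProduct.comm R H H).toLinearMap) ∘ₗ
    (TensorProduct.assoc R H H V).symm.toLinearMap ∘ₗ lTensor H lamV ∘ₗ
    (TensorProduct.comm R V H).toLinearMap

lemma coactTwist_comp_coaction
    (hSinv : mul' R H ∘ₗ rTensor H Sinv ∘ₗ (TensorProduct.comm R H H).toLinearMap ∘ₗ comul =
      Algebra.linearMap R H ∘ₗ counit)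
    (hcoassoc : rTensor V comul ∘ₗ lamV =
      (TensorProduct.assoc R H H V).symm.toLinearMap ∘ₗ lTensor H lamV ∘ₗ lamV)
    (hcounit : (TensorProduct.lid R V).toLinearMap ∘ₗ rTensor V counit ∘ₗ lamV = .id) :
    coactTwist Sinv lamV ∘ₗ lamV = (TensorProduct.mk R V H).flip 1 := by
  have hε := (LinearEquiv.eq_toLinearMap_symm_comp _ _).2 hcounit
  calc coactTwist Sinv lamV ∘ₗ lamV
      = (TensorProduct.comm R H V).toLinearMap ∘ₗ rTensor V (Algebra.linearMap R H) ∘ₗ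
          rTensor V counit ∘ₗ lamV := by
        simp only [coactTwist, comp_assoc, ← hcoassoc]
        rw [← comp_assoc _ (rTensor V comul), ← rTensor_comp, comp_assoc, comp_assoc, hSinv,
          rTensor_comp, comp_assoc]
    _ = (TensorProduct.mk R V H).flip 1 := by rw [hε]; ext; simp

lemma coactTwist_comp_mk (a : H) :
    coactTwist Sinv lamV ∘ₗ TensorProduct.mk R H V a =
      (TensorProduct.comm R H V).toLinearMap ∘ₗ rTensor V (mulRight R a ∘ₗ Sinv) ∘ₗ lamV := by
  have hassoc : (TensorProduct.assoc R H H V).symm.toLinearMap ∘ₗ TensorProduct.mk R H _ a =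
      rTensor V (TensorProduct.mk R H H a) := by
    ext; rfl
  rw [coactTwist]
  simp only [comp_assoc, lTensor_comp_mk]
  rw [← comp_assoc lamV, hassoc, ← comp_assoc lamV, ← rTensor_comp]
  congr 3

lemma coactUntwist_comp_coactTwist
    (hSinv : mul' R H ∘ₗ (TensorProduct.comm R H H).toLinearMap ∘ₗ rTensor H Sinv ∘ₗ comul =
      Algebra.linearMap R H ∘ₗ counit)
    (hcoassoc : rTensor V comul ∘ₗ lamV =
      (TensorProduct.assoc R H H V).symm.toLinearMap ∘ₗ lTensor H lamV ∘ₗ lamV)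
    (hcounit : (TensorProduct.lid R V).toLinearMap ∘ₗ rTensor V counit ∘ₗ lamV = .id) :
    coactUntwist lamV ∘ₗ coactTwist Sinv lamV = .id := by
  have hε := (LinearEquiv.eq_toLinearMap_symm_comp _ _).2 hcounit
  refine TensorProduct.ext (LinearMap.ext fun a => ?_)
  change coactUntwist lamV ∘ₗ coactTwist Sinv lamV ∘ₗ TensorProduct.mk R H V a =
    TensorProduct.mk R H V a
  have hpairing : mul' R H ∘ₗ (TensorProduct.comm R H H).toLinearMap ∘ₗ
      rTensor H (mulRight R a ∘ₗ Sinv) ∘ₗ comul =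
        mulRight R a ∘ₗ Algebra.linearMap R H ∘ₗ counit := by
    rw [← hSinv, rTensor_comp]
    simp only [← comp_assoc]
    congr 2
    ext; simp [mul_assoc]
  calc coactUntwist lamV ∘ₗ coactTwist Sinv lamV ∘ₗ TensorProduct.mk R H V a
      = rTensor V (mul' R H ∘ₗ (TensorProduct.comm R H H).toLinearMap) ∘ₗ
          (TensorProduct.assoc R H H V).symm.toLinearMap ∘ₗ lTensor H lamV ∘ₗ
          rTensor V (mulRight R a ∘ₗ Sinv) ∘ₗ lamV := by
        rw [coactTwist_comp_mk, coactUntwist]; simp only [comp_assoc, comm_comp_comm_assoc]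
    _ = rTensor V (mul' R H ∘ₗ (TensorProduct.comm R H H).toLinearMap) ∘ₗ
          rTensor V (rTensor H (mulRight R a ∘ₗ Sinv)) ∘ₗ rTensor V comul ∘ₗ lamV := by
        rw [hcoassoc, ← comp_assoc lamV (rTensor V _) (lTensor H lamV), lTensor_comp_rTensor,
          ← rTensor_comp_lTensor, rTensor_tensor]
        simp only [comp_assoc, LinearEquiv.symm_comp_assoc]
    _ = rTensor V (mulRight R a ∘ₗ Algebra.linearMap R H) ∘ₗ rTensor V counit ∘ₗ lamV := by
        simp only [← comp_assoc, ← rTensor_comp]; simp only [comp_assoc, hpairing]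
    _ = TensorProduct.mk R H V a := by rw [hε]; ext; simp

variable (M : Type*) [AddCommMonoid M] [Module R M]

lemma lTensor_comp_tensorTensorTensorComm_comp_lTensor_coaction :
    lTensor (M ⊗[R] V) (mul' R H ∘ₗ rTensor H Sinv ∘ₗ (TensorProduct.comm R H H).toLinearMap) ∘ₗ
        (TensorProduct.tensorTensorTensorComm R M H V H).toLinearMap ∘ₗ
        lTensor (M ⊗[R] H) (TensorProduct.comm R H V).toLinearMap ∘ₗ lTensor (M ⊗[R] H) lamV =
      (TensorProduct.assoc R M V H).symm.toLinearMap ∘ₗ lTensor M (coactTwist Sinv lamV) ∘ₗ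
        (TensorProduct.assoc R M H V).toLinearMap := by
  refine TensorProduct.ext_threefold fun m a v => ?_
  have hmk : lTensor (M ⊗[R] V)
        (mul' R H ∘ₗ rTensor H Sinv ∘ₗ (TensorProduct.comm R H H).toLinearMap) ∘ₗ
        (TensorProduct.tensorTensorTensorComm R M H V H).toLinearMap ∘ₗ
        TensorProduct.mk R (M ⊗[R] H) (V ⊗[R] H) (m ⊗ₜ a) ∘ₗ
        (TensorProduct.comm R H V).toLinearMap =
      (TensorProduct.assoc R M V H).symm.toLinearMap ∘ₗ TensorProduct.mk R M (V ⊗[R] H) m ∘ₗ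
        (TensorProduct.comm R H V).toLinearMap ∘ₗ rTensor V (mulRight R a ∘ₗ Sinv) := by
    ext; simp
  have htwist := LinearMap.congr_fun (coactTwist_comp_mk Sinv lamV a) v
  simp only [comp_apply, mk_apply] at htwist
  simpa [htwist] using LinearMap.congr_fun hmk (lamV v)

lemma lTensor_coactTwist_injective
    (hSinv : mul' R H ∘ₗ (TensorProduct.comm R H H).toLinearMap ∘ₗ rTensor H Sinv ∘ₗ comul =
      Algebra.linearMap R H ∘ₗ counit)
    (hcoassoc : rTensor V comul ∘ₗ lamV =
      (TensorProduct.assoc R H H V).symm.toLinearMap ∘ₗ lTensor H lamV ∘ₗ lamV)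
    (hcounit : (TensorProduct.lid R V).toLinearMap ∘ₗ rTensor V counit ∘ₗ lamV = .id) :
    Function.Injective (lTensor M (coactTwist Sinv lamV)) := by
  refine Function.LeftInverse.injective (g := lTensor M (coactUntwist lamV)) fun x => ?_
  rw [← comp_apply, ← lTensor_comp, coactUntwist_comp_coactTwist Sinv lamV hSinv hcoassoc hcounit,
    lTensor_id, id_apply]

lemma assoc_symm_lTensor_coactTwist_lTensor_coaction
    (hSinv : mul' R H ∘ₗ rTensor H Sinv ∘ₗ (TensorProduct.comm R H H).toLinearMap ∘ₗ comul =
      Algebra.linearMap R H ∘ₗ counit)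
    (hcoassoc : rTensor V comul ∘ₗ lamV =
      (TensorProduct.assoc R H H V).symm.toLinearMap ∘ₗ lTensor H lamV ∘ₗ lamV)
    (hcounit : (TensorProduct.lid R V).toLinearMap ∘ₗ rTensor V counit ∘ₗ lamV = .id)
    (ξ : M ⊗[R] V) :
    (TensorProduct.assoc R M V H).symm (lTensor M (coactTwist Sinv lamV) (lTensor M lamV ξ)) =
      ξ ⊗ₜ 1 := by
  have hflip : (TensorProduct.assoc R M V H).symm.toLinearMap ∘ₗ
      lTensor M ((TensorProduct.mk R V H).flip 1) = (TensorProduct.mk R (M ⊗[R] V) H).flip 1 := by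
    ext; rfl
  rw [← lTensor_comp_apply, coactTwist_comp_coaction Sinv lamV hSinv hcoassoc hcounit]
  exact LinearMap.congr_fun hflip ξ

end Twist

end HopfAlgebra

open HopfAlgebra in
theorem coinvariants_eq_cotensor_general
    (k H M V : Type*) [Field k] [Ring H] [HopfAlgebra k H]
    [AddCommGroup M] [Module k M] [AddCommGroup V] [Module k V]
    (Sinv : H →ₗ[k] H)
    (hS₁ : ∀ h : H, Sinv (HopfAlgebra.antipode (R := k) h) = h)
    (hS₂ : ∀ h : H, HopfAlgebra.antipode (R := k) (Sinv h) = h)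
    -- `M` is a right `H`-comodule
    (ρM : M →ₗ[k] M ⊗[k] H)
    -- `V` is a left `H`-comodule
    (lamV : V →ₗ[k] H ⊗[k] V)
    (hlamV_coassoc : (LinearMap.rTensor V Coalgebra.comul) ∘ₗ lamV =
      (TensorProduct.assoc k H H V).symm.toLinearMap ∘ₗ
        (LinearMap.lTensor H lamV) ∘ₗ lamV)
    (hlamV_counit : (TensorProduct.lid k V).toLinearMap ∘ₗ
      (LinearMap.rTensor V Coalgebra.counit) ∘ₗ lamV = LinearMap.id) :
    -- the right `H`-coaction on `M ⊗ V`: `m ⊗ v ↦ (m₍₀₎ ⊗ v₍₀₎) ⊗ S⁻¹(v₍₋₁₎) m₍₁₎`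
    let δ : M ⊗[k] V →ₗ[k] (M ⊗[k] V) ⊗[k] H :=
      (LinearMap.lTensor (M ⊗[k] V)
          ((LinearMap.mul' k H) ∘ₗ (LinearMap.rTensor H Sinv) ∘ₗ
            (TensorProduct.comm k H H).toLinearMap)) ∘ₗ
        (TensorProduct.tensorTensorTensorComm k M H V H).toLinearMap ∘ₗ
        (LinearMap.lTensor (M ⊗[k] H) (TensorProduct.comm k H V).toLinearMap) ∘ₗ
        (TensorProduct.map ρM lamV)
    {ξ : M ⊗[k] V | δ ξ = ξ ⊗ₜ[k] (1 : H)} =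
      {ξ : M ⊗[k] V | (LinearMap.rTensor V ρM) ξ =
        (TensorProduct.assoc k M H V).symm ((LinearMap.lTensor M lamV) ξ)} := by
  intro δ
  have hδ : δ = ((TensorProduct.assoc k M V H).symm.toLinearMap ∘ₗ
      lTensor M (coactTwist Sinv lamV) ∘ₗ (TensorProduct.assoc k M H V).toLinearMap) ∘ₗ
      rTensor V ρM := by
    rw [← lTensor_comp_tensorTensorTensorComm_comp_lTensor_coaction]
    simp only [δ, ← lTensor_comp_rTensor, comp_assoc]
  ext ξ
  rw [Set.mem_ofPred_eq, Set.mem_ofPred_eq, hδ, ← assoc_symm_lTensor_coactTwist_lTensor_coaction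
    Sinv lamV M (mul_rTensor_comm_comul_of_antipode_inv Sinv hS₁ hS₂) hlamV_coassoc hlamV_counit]
  simp only [comp_apply, LinearEquiv.coe_coe, (LinearEquiv.injective _).eq_iff,
    (lTensor_coactTwist_injective Sinv lamV M (mul_comm_rTensor_comul_of_antipode_inv Sinv hS₁ hS₂)
      hlamV_coassoc hlamV_counit).eq_iff, LinearEquiv.eq_symm_apply]

/-- **Coinvariants of `M ◁ V` are the cotensor product `M □^H V`.**
Let `H` be a Hopf algebra over a field `k` with bijective antipode `S` (with inverse
`Sinv`), `M` a right `H`-comodule and `V` a left `H`-comodule.  Equip `M ⊗ V` with the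
right `H`-coaction `m ⊗ v ↦ (m₍₀₎ ⊗ v₍₀₎) ⊗ S⁻¹(v₍₋₁₎) m₍₁₎`.  Then the coinvariants of
`M ⊗ V` coincide with the cotensor product
`M □^H V = {ξ : (ρ_M ⊗ id)(ξ) = (id ⊗ λ_V)(ξ)}`. -/
theorem coinvariants_eq_cotensor
    (k H M V : Type*) [Field k] [Ring H] [HopfAlgebra k H]
    [AddCommGroup M] [Module k M] [AddCommGroup V] [Module k V]
    (Sinv : H →ₗ[k] H)
    (hS₁ : ∀ h : H, Sinv (HopfAlgebra.antipode (R := k) h) = h)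
    (hS₂ : ∀ h : H, HopfAlgebra.antipode (R := k) (Sinv h) = h)
    -- `M` is a right `H`-comodule
    (ρM : M →ₗ[k] M ⊗[k] H)
    (hρM_coassoc : (LinearMap.rTensor H ρM) ∘ₗ ρM =
      (TensorProduct.assoc k M H H).symm.toLinearMap ∘ₗ
        (LinearMap.lTensor M Coalgebra.comul) ∘ₗ ρM)
    (hρM_counit : (TensorProduct.rid k M).toLinearMap ∘ₗ
      (LinearMap.lTensor M Coalgebra.counit) ∘ₗ ρM = LinearMap.id)
    -- `V` is a left `H`-comodule
    (lamV : V →ₗ[k] H ⊗[k] V)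
    (hlamV_coassoc : (LinearMap.rTensor V Coalgebra.comul) ∘ₗ lamV =
      (TensorProduct.assoc k H H V).symm.toLinearMap ∘ₗ
        (LinearMap.lTensor H lamV) ∘ₗ lamV)
    (hlamV_counit : (TensorProduct.lid k V).toLinearMap ∘ₗ
      (LinearMap.rTensor V Coalgebra.counit) ∘ₗ lamV = LinearMap.id) :
    -- the right `H`-coaction on `M ⊗ V`: `m ⊗ v ↦ (m₍₀₎ ⊗ v₍₀₎) ⊗ S⁻¹(v₍₋₁₎) m₍₁₎`
    let δ : M ⊗[k] V →ₗ[k] (M ⊗[k] V) ⊗[k] H :=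
      (LinearMap.lTensor (M ⊗[k] V)
          ((LinearMap.mul' k H) ∘ₗ (LinearMap.rTensor H Sinv) ∘ₗ
            (TensorProduct.comm k H H).toLinearMap)) ∘ₗ
        (TensorProduct.tensorTensorTensorComm k M H V H).toLinearMap ∘ₗ
        (LinearMap.lTensor (M ⊗[k] H) (TensorProduct.comm k H V).toLinearMap) ∘ₗ
        (TensorProduct.map ρM lamV)
    {ξ : M ⊗[k] V | δ ξ = ξ ⊗ₜ[k] (1 : H)} =
      {ξ : M ⊗[k] V | (LinearMap.rTensor V ρM) ξ =
        (TensorProduct.assoc k M H V).symm ((LinearMap.lTensor M lamV) ξ)} :=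
  coinvariants_eq_cotensor_general k H M V Sinv hS₁ hS₂ ρM lamV hlamV_coassoc hlamV_counit
end

section
/- Let k be a field, H and H' Hopf algebras over k with the antipode S of H bijective, χ : H → H' a bialgebra homomorphism, and A' a right H'-comodule algebra with coaction ρ_{A'}(a') = a'₍₀₎ ⊗ a'₍₁₎. Equip H ⊗ A' with the right H'-coaction (h ⊗ a') ↦ (h₍₁₎ ⊗ a'₍₀₎) ⊗ χ(h₍₂₎) a'₍₁₎, and let (H ⊗ A')^{co H'} denote its coinvariants. Then the map ∑ h_i ⊗ a'_i ↦ ∑ a'_i ⊗ S(h_i) takes (H ⊗ A')^{co H'} into the cotensor product A' □^{H'} H and is a bijection from (H ⊗ A')^{co H'} onto A' □^{H'} H, with inverse given by ∑ a'_i ⊗ h_i ↦ ∑ S⁻¹(h_i) ⊗ a'_i. -/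
/-!
For `f : H → H'` let `σ_f (h ⊗ m ⊗ x) = h₍₁₎ ⊗ m ⊗ f(h₍₂₎) x` (`shear f` below).
Coassociativity gives `σ_f ∘ σ_g = σ_{f * g}` for the convolution product, and an algebra map `χ`
has convolution inverse `χ ∘ S`, so `σ_χ` is invertible with inverse `σ_{χ ∘ S}`. Up to
reassociation the coaction on `H ⊗ A'` is `σ_χ ∘ (id ⊗ ρ)`, so `ξ` is coinvariant iff
`(id ⊗ ρ) ξ = σ_{χ ∘ S} (ξ ⊗ 1)`. Applying the injective map `h ⊗ y ↦ y ⊗ S h` and using that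
`S` reverses the comultiplication, `Δ (S h) = S h₍₂₎ ⊗ S h₍₁₎`, this becomes the cotensor
condition on `∑ a'ᵢ ⊗ S hᵢ`.
-/

open TensorProduct LinearMap

open Coalgebra HopfAlgebra WithConv

namespace HopfAlgebra

variable {R H B : Type*} [CommSemiring R] [Semiring H] [HopfAlgebra R H] [Semiring B] [Algebra R B]

lemma algHom_comp_antipode_mul_self (φ : H →ₐ[R] B) :
    toConv (φ.toLinearMap ∘ₗ antipode R) * toConv φ.toLinearMap = 1 := by
  calc toConv (φ.toLinearMap ∘ₗ antipode R) * toConv φ.toLinearMap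
      = toConv (φ.toLinearMap ∘ₗ
          (toConv (antipode R) * toConv LinearMap.id : WithConv (H →ₗ[R] H)).ofConv) := by
        rw [LinearMap.algHom_comp_convMul_distrib]; rfl
    _ = 1 := by rw [LinearMap.antipode_mul_id]; ext; simp

lemma self_mul_algHom_comp_antipode (φ : H →ₐ[R] B) :
    toConv φ.toLinearMap * toConv (φ.toLinearMap ∘ₗ antipode R) = 1 := by
  calc toConv φ.toLinearMap * toConv (φ.toLinearMap ∘ₗ antipode R)
      = toConv (φ.toLinearMap ∘ₗ
          (toConv LinearMap.id * toConv (antipode R) : WithConv (H →ₗ[R] H)).ofConv) := by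
        rw [LinearMap.algHom_comp_convMul_distrib]; rfl
    _ = 1 := by rw [LinearMap.id_mul_antipode]; ext; simp

open Algebra.TensorProduct in
/-- Both sides are convolution inverses of `comul`: the right-hand side factors as
`(1 ⊗ S ·) * (S · ⊗ 1)` and `comul` as `(· ⊗ 1) * (1 ⊗ ·)`. -/
lemma comul_comp_antipode :
    comul ∘ₗ antipode R =
      map (antipode R) (antipode R) ∘ₗ (TensorProduct.comm R H H).toLinearMap ∘ₗ comul := by
  have hG : toConv (map (antipode R) (antipode R) ∘ₗ
        (TensorProduct.comm R H H).toLinearMap ∘ₗ comul) =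
      toConv ((includeRight : H →ₐ[R] H ⊗[R] H).toLinearMap ∘ₗ antipode R) *
        toConv ((includeLeft : H →ₐ[R] H ⊗[R] H).toLinearMap ∘ₗ antipode R) := by
    ext h
    simp [(ℛ R h).convMul_apply, ← (ℛ R h).eq]
  have hδ : toConv (comul : H →ₗ[R] H ⊗[R] H) =
      toConv (includeLeft : H →ₐ[R] H ⊗[R] H).toLinearMap *
        toConv (includeRight : H →ₐ[R] H ⊗[R] H).toLinearMap := by
    ext h
    simp [(ℛ R h).convMul_apply, ← (ℛ R h).eq]
  have hleft : toConv (map (antipode R) (antipode R) ∘ₗ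
      (TensorProduct.comm R H H).toLinearMap ∘ₗ comul) * toConv comul = 1 := by
    rw [hG, hδ, ← mul_assoc, mul_assoc _ _ (toConv includeLeft.toLinearMap),
      algHom_comp_antipode_mul_self, mul_one, algHom_comp_antipode_mul_self]
  exact congrArg ofConv (left_inv_eq_right_inv hleft LinearMap.comul_right_inv).symm

end HopfAlgebra

section Shear

variable {R C M B ι : Type*} [CommSemiring R] [AddCommMonoid C] [Module R C] [Coalgebra R C]
  [AddCommMonoid M] [Module R M] [Semiring B] [Algebra R B]

noncomputable def shear (f : WithConv (C →ₗ[R] B)) : C ⊗[R] (M ⊗[R] B) →ₗ[R] C ⊗[R] (M ⊗[R] B) :=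
  (TensorProduct.assoc R C M B).toLinearMap ∘ₗ lTensor (C ⊗[R] M) (mul' R B) ∘ₗ
    (tensorTensorTensorComm R C B M B).toLinearMap ∘ₗ map (lTensor C f.ofConv ∘ₗ comul) LinearMap.id

lemma shear_tmul (f : WithConv (C →ₗ[R] B)) {c : C} (r : Repr R c ι) (m : M) (x : B) :
    shear f (c ⊗ₜ (m ⊗ₜ x)) = ∑ i ∈ r.index, r.left i ⊗ₜ (m ⊗ₜ (f (r.right i) * x)) := by
  simp [shear, ← r.eq, sum_tmul, map_sum]

lemma shear_one : (shear 1 : C ⊗[R] (M ⊗[R] B) →ₗ[R] _) = LinearMap.id := by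
  ext c m x
  simp [shear, LinearMap.convOne_def, lTensor_comp, lTensor_counit_comul]

lemma shear_mul (f g : WithConv (C →ₗ[R] B)) :
    (shear (f * g) : C ⊗[R] (M ⊗[R] B) →ₗ[R] _) = shear f ∘ₗ shear g := by
  ext c m x
  let T : C ⊗[R] (C ⊗[R] C) →ₗ[R] C ⊗[R] (M ⊗[R] B) :=
    lTensor C (TensorProduct.mk R M B m ∘ₗ mulRight R x ∘ₗ mul' R B ∘ₗ map f.ofConv g.ofConv)
  have hcoassoc := congrArg T (sum_tmul_tmul_eq (ℛ R c) (fun i => ℛ R ((ℛ R c).left i))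
    (fun i => ℛ R ((ℛ R c).right i)))
  simp only [T, map_sum, lTensor_tmul, coe_comp, Function.comp_apply, map_tmul, mul'_apply,
    mulRight_apply, mk_apply] at hcoassoc
  simp only [AlgebraTensorModule.curry_apply, curry_apply, coe_restrictScalars, coe_comp,
    Function.comp_apply, shear_tmul _ (ℛ R c), map_sum, shear_tmul _ (ℛ R ((ℛ R c).left _)),
    (ℛ R ((ℛ R c).right _)).convMul_apply, Finset.sum_mul, tmul_sum]
  simpa only [mul_assoc] using hcoassoc.symm

lemma shear_eq_iff_eq_shear {f g : WithConv (C →ₗ[R] B)} (hfg : f * g = 1) (hgf : g * f = 1)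
    {u v : C ⊗[R] (M ⊗[R] B)} : shear f u = v ↔ u = shear g v := by
  constructor
  · rintro rfl
    rw [← comp_apply, ← shear_mul, hgf, shear_one, id_apply]
  · rintro rfl
    rw [← comp_apply, ← shear_mul, hfg, shear_one, id_apply]

end Shear

section AntipodeFlip

variable {R H M N B : Type*} [CommSemiring R] [Semiring H] [HopfAlgebra R H]
  [AddCommMonoid M] [Module R M] [AddCommMonoid N] [Module R N] [Semiring B] [Algebra R B]

variable (R H M) in
noncomputable def antipodeFlip : H ⊗[R] M →ₗ[R] M ⊗[R] H :=
  map LinearMap.id (antipode R) ∘ₗ (TensorProduct.comm R H M).toLinearMap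

lemma antipodeFlip_leftInverse {Sinv : H →ₗ[R] H} (hS : Function.LeftInverse Sinv (antipode R)) :
    Function.LeftInverse (map Sinv LinearMap.id ∘ₗ (TensorProduct.comm R M H).toLinearMap)
      (antipodeFlip R H M) := by
  intro ξ
  induction ξ using TensorProduct.induction_on <;> simp_all [antipodeFlip, hS _]

lemma antipodeFlip_rightInverse {Sinv : H →ₗ[R] H} (hS : Function.RightInverse Sinv (antipode R)) :
    Function.RightInverse (map Sinv LinearMap.id ∘ₗ (TensorProduct.comm R M H).toLinearMap)
      (antipodeFlip R H M) := by
  intro η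
  induction η using TensorProduct.induction_on <;> simp_all [antipodeFlip, hS _]

lemma antipodeFlip_lTensor (g : M →ₗ[R] N) (ξ : H ⊗[R] M) :
    antipodeFlip R H N (lTensor H g ξ) = rTensor H g (antipodeFlip R H M ξ) := by
  induction ξ using TensorProduct.induction_on <;> simp_all [antipodeFlip]

lemma antipodeFlip_shear_assoc_tmul_one (f : H →ₗ[R] B) (ξ : H ⊗[R] M) :
    antipodeFlip R H (M ⊗[R] B)
        (shear (toConv (f ∘ₗ antipode R)) (TensorProduct.assoc R H M B (ξ ⊗ₜ 1))) =
      (TensorProduct.assoc R M B H).symm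
        (lTensor M (rTensor H f ∘ₗ comul) (antipodeFlip R H M ξ)) := by
  induction ξ using TensorProduct.induction_on with
  | zero => simp
  | add ξ ξ' hξ hξ' => simp_all [add_tmul]
  | tmul h m =>
    have hcomul := congr($(comul_comp_antipode (R := R) (H := H)) h)
    simp only [coe_comp, Function.comp_apply] at hcomul
    simp [antipodeFlip, shear_tmul _ (ℛ R h), hcomul, ← (ℛ R h).eq, map_sum, tmul_sum]

end AntipodeFlip

section Coinvariants

variable {R H M B : Type*} [CommSemiring R] [Semiring H] [HopfAlgebra R H]
  [AddCommMonoid M] [Module R M] [Semiring B] [Algebra R B]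

noncomputable def tensorCoaction (χ : H →ₗ[R] B) (ρ : M →ₗ[R] M ⊗[R] B) :
    H ⊗[R] M →ₗ[R] (H ⊗[R] M) ⊗[R] B :=
  lTensor (H ⊗[R] M) (mul' R B) ∘ₗ (tensorTensorTensorComm R H B M B).toLinearMap ∘ₗ
    map (lTensor H χ ∘ₗ comul) ρ

lemma assoc_tensorCoaction (χ : H →ₗ[R] B) (ρ : M →ₗ[R] M ⊗[R] B) (ξ : H ⊗[R] M) :
    TensorProduct.assoc R H M B (tensorCoaction χ ρ ξ) = shear (toConv χ) (lTensor H ρ ξ) := by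
  simp only [tensorCoaction, shear, coe_comp, Function.comp_apply, map_lTensor, id_comp,
    LinearEquiv.coe_coe]

theorem rTensor_antipodeFlip_eq_iff (χ : H →ₐ[R] B) (ρ : M →ₗ[R] M ⊗[R] B)
    {Sinv : H →ₗ[R] H} (hS : Function.LeftInverse Sinv (antipode R)) (ξ : H ⊗[R] M) :
    rTensor H ρ (antipodeFlip R H M ξ) = (TensorProduct.assoc R M B H).symm
        (lTensor M (rTensor H χ.toLinearMap ∘ₗ comul) (antipodeFlip R H M ξ)) ↔
      tensorCoaction χ.toLinearMap ρ ξ = ξ ⊗ₜ 1 := by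
  set ζ := TensorProduct.assoc R H M B (ξ ⊗ₜ 1)
  calc _ ↔ antipodeFlip R H (M ⊗[R] B) (lTensor H ρ ξ) = antipodeFlip R H (M ⊗[R] B)
        (shear (toConv (χ.toLinearMap ∘ₗ antipode R)) ζ) := by
        rw [antipodeFlip_lTensor, antipodeFlip_shear_assoc_tmul_one]
    _ ↔ lTensor H ρ ξ = shear (toConv (χ.toLinearMap ∘ₗ antipode R)) ζ :=
        (antipodeFlip_leftInverse hS).injective.eq_iff
    _ ↔ shear (toConv χ.toLinearMap) (lTensor H ρ ξ) = ζ :=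
        (shear_eq_iff_eq_shear (HopfAlgebra.self_mul_algHom_comp_antipode χ)
          (HopfAlgebra.algHom_comp_antipode_mul_self χ)).symm
    _ ↔ tensorCoaction χ.toLinearMap ρ ξ = ξ ⊗ₜ 1 := by
        rw [← assoc_tensorCoaction, (TensorProduct.assoc R H M B).injective.eq_iff]

end Coinvariants

theorem coinvariants_iso_cotensor_general
    (k H H' A' : Type*) [Field k] [Ring H] [Ring H'] [HopfAlgebra k H] [HopfAlgebra k H']
    [Ring A'] [Algebra k A']
    (χ : H →ₐc[k] H')
    (Sinv : H →ₗ[k] H)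
    (hS₁ : ∀ h : H, Sinv (HopfAlgebra.antipode (R := k) h) = h)
    (hS₂ : ∀ h : H, HopfAlgebra.antipode (R := k) (Sinv h) = h)
    -- `A'` is a right `H'`-comodule algebra
    (ρA' : A' →ₐ[k] A' ⊗[k] H') :
    -- the right `H'`-coaction `h ⊗ a' ↦ (h₍₁₎ ⊗ a'₍₀₎) ⊗ χ(h₍₂₎) a'₍₁₎` on `H ⊗ A'`
    let δ : H ⊗[k] A' →ₗ[k] (H ⊗[k] A') ⊗[k] H' :=
      (LinearMap.lTensor (H ⊗[k] A') (LinearMap.mul' k H')) ∘ₗ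
        (TensorProduct.tensorTensorTensorComm k H H' A' H').toLinearMap ∘ₗ
        (TensorProduct.map
          ((LinearMap.lTensor H (χ : H →ₗ[k] H')) ∘ₗ Coalgebra.comul) ρA'.toLinearMap)
    -- the coinvariants `(H ⊗ A')^{co H'}`
    let coinv : Set (H ⊗[k] A') := {ξ | δ ξ = ξ ⊗ₜ[k] (1 : H')}
    -- the cotensor product `A' □^{H'} H ⊆ A' ⊗ H`
    let cot : Set (A' ⊗[k] H) := {η | (LinearMap.rTensor H ρA'.toLinearMap) η =
      ((TensorProduct.assoc k A' H' H).symm.toLinearMap ∘ₗ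
        (LinearMap.lTensor A'
          ((LinearMap.rTensor H (χ : H →ₗ[k] H')) ∘ₗ Coalgebra.comul))) η}
    -- the map `∑ hᵢ ⊗ a'ᵢ ↦ ∑ a'ᵢ ⊗ S(hᵢ)`
    let Ψ : H ⊗[k] A' →ₗ[k] A' ⊗[k] H :=
      (TensorProduct.map LinearMap.id (HopfAlgebra.antipode (R := k))) ∘ₗ
        (TensorProduct.comm k H A').toLinearMap
    -- the map `∑ a'ᵢ ⊗ hᵢ ↦ ∑ S⁻¹(hᵢ) ⊗ a'ᵢ`
    let Ψ' : A' ⊗[k] H →ₗ[k] H ⊗[k] A' :=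
      (TensorProduct.map Sinv LinearMap.id) ∘ₗ (TensorProduct.comm k A' H).toLinearMap
    (∀ ξ ∈ coinv, Ψ ξ ∈ cot) ∧ Set.BijOn Ψ coinv cot ∧
      (∀ ξ ∈ coinv, Ψ' (Ψ ξ) = ξ) ∧ (∀ η ∈ cot, Ψ (Ψ' η) = η) ∧
      (∀ η ∈ cot, Ψ' η ∈ coinv) := by
  intro δ coinv cot Ψ Ψ'
  have hΨ'Ψ : Function.LeftInverse Ψ' Ψ := antipodeFlip_leftInverse hS₁
  have hΨΨ' : Function.RightInverse Ψ' Ψ := antipodeFlip_rightInverse hS₂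
  have hmem (ξ : H ⊗[k] A') : Ψ ξ ∈ cot ↔ ξ ∈ coinv :=
    rTensor_antipodeFlip_eq_iff (χ : H →ₐ[k] H') ρA'.toLinearMap hS₁ ξ
  have hmaps : Set.MapsTo Ψ coinv cot := fun ξ hξ => (hmem ξ).2 hξ
  have hmaps' : Set.MapsTo Ψ' cot coinv := fun η hη => (hmem (Ψ' η)).1 (by rwa [hΨΨ' η])
  exact ⟨hmaps, Set.InvOn.bijOn ⟨fun ξ _ => hΨ'Ψ ξ, fun η _ => hΨΨ' η⟩ hmaps hmaps',
    fun ξ _ => hΨ'Ψ ξ, fun η _ => hΨΨ' η, hmaps'⟩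

/-- **The isomorphism `(H ⊗ A')^{co H'} ≅ A' □^{H'} H`.**
Let `χ : H → H'` be a bialgebra homomorphism of Hopf algebras over a field `k`, with the
antipode `S` of `H` bijective (inverse `Sinv`), and `A'` a right `H'`-comodule algebra.
Equip `H ⊗ A'` with the right `H'`-coaction
`h ⊗ a' ↦ (h₍₁₎ ⊗ a'₍₀₎) ⊗ χ(h₍₂₎) a'₍₁₎`.  Then `∑ hᵢ ⊗ a'ᵢ ↦ ∑ a'ᵢ ⊗ S(hᵢ)` takes the
coinvariants `(H ⊗ A')^{co H'}` into the cotensor product `A' □^{H'} H` and is a bijection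
onto it, with inverse `∑ a'ᵢ ⊗ hᵢ ↦ ∑ S⁻¹(hᵢ) ⊗ a'ᵢ`. -/
theorem coinvariants_iso_cotensor
    (k H H' A' : Type*) [Field k] [Ring H] [Ring H'] [HopfAlgebra k H] [HopfAlgebra k H']
    [Ring A'] [Algebra k A']
    (χ : H →ₐc[k] H')
    (Sinv : H →ₗ[k] H)
    (hS₁ : ∀ h : H, Sinv (HopfAlgebra.antipode (R := k) h) = h)
    (hS₂ : ∀ h : H, HopfAlgebra.antipode (R := k) (Sinv h) = h)
    -- `A'` is a right `H'`-comodule algebra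
    (ρA' : A' →ₐ[k] A' ⊗[k] H')
    (hρA'_coassoc : (LinearMap.rTensor H' ρA'.toLinearMap) ∘ₗ ρA'.toLinearMap =
      (TensorProduct.assoc k A' H' H').symm.toLinearMap ∘ₗ
        (LinearMap.lTensor A' Coalgebra.comul) ∘ₗ ρA'.toLinearMap)
    (hρA'_counit : (TensorProduct.rid k A').toLinearMap ∘ₗ
      (LinearMap.lTensor A' Coalgebra.counit) ∘ₗ ρA'.toLinearMap = LinearMap.id) :
    -- the right `H'`-coaction `h ⊗ a' ↦ (h₍₁₎ ⊗ a'₍₀₎) ⊗ χ(h₍₂₎) a'₍₁₎` on `H ⊗ A'`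
    let δ : H ⊗[k] A' →ₗ[k] (H ⊗[k] A') ⊗[k] H' :=
      (LinearMap.lTensor (H ⊗[k] A') (LinearMap.mul' k H')) ∘ₗ
        (TensorProduct.tensorTensorTensorComm k H H' A' H').toLinearMap ∘ₗ
        (TensorProduct.map
          ((LinearMap.lTensor H (χ : H →ₗ[k] H')) ∘ₗ Coalgebra.comul) ρA'.toLinearMap)
    -- the coinvariants `(H ⊗ A')^{co H'}`
    let coinv : Set (H ⊗[k] A') := {ξ | δ ξ = ξ ⊗ₜ[k] (1 : H')}
    -- the cotensor product `A' □^{H'} H ⊆ A' ⊗ H`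
    let cot : Set (A' ⊗[k] H) := {η | (LinearMap.rTensor H ρA'.toLinearMap) η =
      ((TensorProduct.assoc k A' H' H).symm.toLinearMap ∘ₗ
        (LinearMap.lTensor A'
          ((LinearMap.rTensor H (χ : H →ₗ[k] H')) ∘ₗ Coalgebra.comul))) η}
    -- the map `∑ hᵢ ⊗ a'ᵢ ↦ ∑ a'ᵢ ⊗ S(hᵢ)`
    let Ψ : H ⊗[k] A' →ₗ[k] A' ⊗[k] H :=
      (TensorProduct.map LinearMap.id (HopfAlgebra.antipode (R := k))) ∘ₗ
        (TensorProduct.comm k H A').toLinearMap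
    -- the map `∑ a'ᵢ ⊗ hᵢ ↦ ∑ S⁻¹(hᵢ) ⊗ a'ᵢ`
    let Ψ' : A' ⊗[k] H →ₗ[k] H ⊗[k] A' :=
      (TensorProduct.map Sinv LinearMap.id) ∘ₗ (TensorProduct.comm k A' H).toLinearMap
    (∀ ξ ∈ coinv, Ψ ξ ∈ cot) ∧ Set.BijOn Ψ coinv cot ∧
      (∀ ξ ∈ coinv, Ψ' (Ψ ξ) = ξ) ∧ (∀ η ∈ cot, Ψ (Ψ' η) = η) ∧
      (∀ η ∈ cot, Ψ' η ∈ coinv) :=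
  coinvariants_iso_cotensor_general k H H' A' χ Sinv hS₁ hS₂ ρA'
end
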